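/- arXiv:1911.04415 — 3 statements merged into one kernel-verified Lean document; each statement's English description precedes it below -/
import Mathlib

section
/- Let p ∈ [2, ∞) and f(x) = (1/2)‖x − x*‖_p² for fixed x* ∈ ℝⁿ. Then f is (p−1)-smooth on ℝⁿ with respect to the ℓp-norm: for all x, y ∈ ℝⁿ, f(y) ≤ f(x) + ⟨y − x, ∇f(x)⟩ + ((p−1)/2)‖y − x‖_p². -/
/-!
Restrict to a line `t ↦ w + t • h` and put `φ t = ‖w + t • h‖_p²`. If the line avoids `0`, then
with `S = ∑ |v_i|^p`, `A = ∑ |v_i|^(p-2) v_i h_i` and `B = ∑ |v_i|^(p-2) h_i²` at `v = w + t • h`,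
`φ = S^(2/p)`, `φ' = 2 S^((2-p)/p) A = 2 ⟪h, J v⟫` for the gradient `J` of `½ ‖·‖_p²`, and
`φ'' = 2 ((2 - p) S^((2-2p)/p) A² + (p - 1) S^((2-p)/p) B)`. The first term is nonpositive, and
Hölder with exponents `p/(p-2)` and `p/2` gives `B ≤ S^((p-2)/p) ‖h‖_p²`, so
`φ'' ≤ 2 (p - 1) ‖h‖_p²` and the claim is the second-order Taylor bound from `0` to `1`. If the
line passes through `0`, then `w` is a multiple of `h`, and since `J` is homogeneous with
`⟪v, J v⟫ = ‖v‖_p²` the claim reduces to `1 ≤ p - 1`.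
-/

open scoped BigOperators

/-- The `ℓp`-norm on `ℝⁿ` (real exponent `p`). -/
noncomputable def pnorm {n : ℕ} (p : ℝ) (x : Fin n → ℝ) : ℝ :=
  (∑ i, |x i| ^ p) ^ (1 / p)

open Filter Finset Real

namespace Real

theorem sign_mul_abs_rpow_sub_one (p z : ℝ) : sign z * |z| ^ (p - 1) = |z| ^ (p - 2) * z := by
  rcases eq_or_ne z 0 with rfl | hz
  · simp [sign_zero]
  · have hz' : 0 < |z| := abs_pos.2 hz
    rw [show p - 1 = (p - 2) + 1 by ring, rpow_add hz', rpow_one]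
    rcases hz.lt_or_gt with h | h
    · rw [sign_of_neg h, abs_of_neg h]; ring
    · rw [sign_of_pos h, abs_of_pos h]; ring

theorem abs_rpow_sub_two_mul_sq {p : ℝ} (hp : p ≠ 0) (z : ℝ) :
    |z| ^ (p - 2) * z ^ 2 = |z| ^ p := by
  rw [← sq_abs, ← rpow_two, ← rpow_add' (abs_nonneg z) (by simpa using hp)]
  ring_nf

theorem hasDerivAt_abs_rpow_sub_two_mul_self {p : ℝ} (hp : 2 ≤ p) (z : ℝ) :
    HasDerivAt (fun z => |z| ^ (p - 2) * z) ((p - 1) * |z| ^ (p - 2)) z := by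
  obtain rfl | hlt := hp.eq_or_lt
  · simpa only [sub_self, rpow_zero, one_mul, show (2 : ℝ) - 1 = 1 by norm_num] using
      hasDerivAt_id' z
  rcases eq_or_ne z 0 with rfl | hz
  · have hp2 : 0 < p - 2 := by linarith
    rw [hasDerivAt_iff_tendsto_slope, abs_zero, zero_rpow hp2.ne', mul_zero]
    have hslope : ∀ w ∈ ({0}ᶜ : Set ℝ),
        |w| ^ (p - 2) = slope (fun z => |z| ^ (p - 2) * z) 0 w := by
      intro w hw
      rw [slope_def_field]
      field_simp [show w ≠ 0 from hw]
      simp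
    refine Tendsto.congr' (eventually_nhdsWithin_of_forall hslope) ?_
    have hcont : Continuous fun w : ℝ => |w| ^ (p - 2) :=
      continuous_abs.rpow_const fun _ => Or.inr hp2.le
    simpa [zero_rpow hp2.ne'] using (hcont.tendsto 0).mono_left nhdsWithin_le_nhds
  · have hd := ((hasDerivAt_abs hz).rpow_const (p := p - 2) (Or.inl (abs_ne_zero.2 hz))).fun_mul
      (hasDerivAt_id' z)
    refine hd.congr_deriv ?_
    have hz' : 0 < |z| := abs_pos.2 hz
    rw [rpow_sub_one hz'.ne']
    rcases hz.lt_or_gt with h | h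
    · simp only [_root_.sign_neg h, SignType.coe_neg, SignType.coe_one, abs_of_neg h]
      field_simp
      ring
    · simp only [sign_pos h, SignType.coe_one, abs_of_pos h]
      field_simp
      ring

end Real

section Pnorm

variable {n : ℕ} {p : ℝ}

theorem sum_abs_rpow_nonneg (v : Fin n → ℝ) : 0 ≤ ∑ i, |v i| ^ p :=
  sum_nonneg fun _ _ => rpow_nonneg (abs_nonneg _) _

theorem sum_abs_rpow_pos {v : Fin n → ℝ} (hv : v ≠ 0) : 0 < ∑ i, |v i| ^ p := by
  obtain ⟨i, hi⟩ := Function.ne_iff.1 hv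
  exact sum_pos' (fun _ _ => rpow_nonneg (abs_nonneg _) _)
    ⟨i, mem_univ i, rpow_pos_of_pos (abs_pos.2 hi) p⟩

theorem pnorm_nonneg (v : Fin n → ℝ) : 0 ≤ pnorm p v :=
  rpow_nonneg (sum_abs_rpow_nonneg v) _

theorem pnorm_rpow (v : Fin n → ℝ) (a : ℝ) :
    pnorm p v ^ a = (∑ i, |v i| ^ p) ^ (a / p) := by
  rw [pnorm, ← rpow_mul (sum_abs_rpow_nonneg v)]
  ring_nf

theorem pnorm_sq (v : Fin n → ℝ) :
    pnorm p v ^ 2 = (∑ i, |v i| ^ p) ^ (2 / p) := by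
  rw [← pnorm_rpow, rpow_two]

theorem pnorm_smul (hp : p ≠ 0) (c : ℝ) (v : Fin n → ℝ) : pnorm p (c • v) = |c| * pnorm p v := by
  simp only [pnorm, Pi.smul_apply, smul_eq_mul, abs_mul, mul_rpow (abs_nonneg c) (abs_nonneg _),
    ← mul_sum]
  rw [mul_rpow (rpow_nonneg (abs_nonneg c) p) (sum_abs_rpow_nonneg v), ← rpow_mul (abs_nonneg c),
    mul_one_div_cancel hp, rpow_one]

theorem sum_abs_rpow_sub_two_mul_sq_le (hp : 2 ≤ p) (v h : Fin n → ℝ) :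
    ∑ i, |v i| ^ (p - 2) * h i ^ 2 ≤ (∑ i, |v i| ^ p) ^ ((p - 2) / p) * pnorm p h ^ 2 := by
  rw [pnorm_sq]
  rcases hp.eq_or_lt with rfl | hp2
  · norm_num [← sq_abs]
  have hpq : HolderConjugate (p / (p - 2)) (p / 2) := by
    refine holderConjugate_iff.2 ⟨(one_lt_div (by linarith)).2 (by linarith), ?_⟩
    field_simp
    ring
  have hold := inner_le_Lp_mul_Lq_of_nonneg univ hpq (f := fun i => |v i| ^ (p - 2))
    (g := fun i => h i ^ 2) (fun _ _ => rpow_nonneg (abs_nonneg _) _) (fun _ _ => sq_nonneg _)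
  have hf : ∀ i, (|v i| ^ (p - 2)) ^ (p / (p - 2)) = |v i| ^ p := fun i => by
    rw [← rpow_mul (abs_nonneg _)]
    field_simp
  have hg : ∀ i, (h i ^ 2) ^ (p / 2) = |h i| ^ p := fun i => by
    rw [← sq_abs, ← rpow_two, ← rpow_mul (abs_nonneg _)]
    field_simp
  simpa only [hf, hg, one_div_div] using hold

end Pnorm

/-- The gradient of `½ ‖·‖_p²`, i.e. the normalized duality map of `ℓp`. -/
noncomputable def dualityMap {n : ℕ} (p : ℝ) (v : Fin n → ℝ) : Fin n → ℝ :=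
  fun i => pnorm p v ^ (2 - p) * (Real.sign (v i) * |v i| ^ (p - 1))

section DualityMap

variable {n : ℕ} {p : ℝ}

theorem dualityMap_apply (v : Fin n → ℝ) (i : Fin n) :
    dualityMap p v i = (∑ j, |v j| ^ p) ^ ((2 - p) / p) * (|v i| ^ (p - 2) * v i) := by
  rw [dualityMap, pnorm_rpow, sign_mul_abs_rpow_sub_one]

theorem sum_mul_dualityMap (v h : Fin n → ℝ) :
    ∑ i, h i * dualityMap p v i =
      (∑ i, |v i| ^ p) ^ ((2 - p) / p) * ∑ i, |v i| ^ (p - 2) * v i * h i := by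
  simp only [dualityMap_apply, mul_sum]
  exact sum_congr rfl fun i _ => by ring

theorem sum_mul_dualityMap_self (hp : p ≠ 0) (v : Fin n → ℝ) :
    ∑ i, v i * dualityMap p v i = pnorm p v ^ 2 := by
  have hsq : ∀ i, |v i| ^ (p - 2) * v i * v i = |v i| ^ p := fun i => by
    rw [mul_assoc, ← sq, abs_rpow_sub_two_mul_sq hp]
  rw [sum_mul_dualityMap, pnorm_sq]
  simp only [hsq]
  rw [← rpow_add_one' (sum_abs_rpow_nonneg v) (by field_simp; simp [hp])]
  congr 1
  field_simp
  ring

theorem dualityMap_smul (hp : p ≠ 0) (c : ℝ) (v : Fin n → ℝ) :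
    dualityMap p (c • v) = c • dualityMap p v := by
  ext i
  rcases eq_or_ne c 0 with rfl | hc
  · simp [dualityMap, sign_zero]
  have hc' : 0 < |c| := abs_pos.2 hc
  have hscale : |c| ^ (2 - p) * |c| ^ (p - 2) = 1 := by
    rw [← rpow_add hc']; simp
  simp only [dualityMap, Pi.smul_apply, smul_eq_mul, sign_mul_abs_rpow_sub_one]
  simp only [pnorm_smul hp, abs_mul, mul_rpow (abs_nonneg c) (pnorm_nonneg v),
    mul_rpow (abs_nonneg c) (abs_nonneg _)]
  linear_combination (pnorm p v ^ (2 - p) * |v i| ^ (p - 2) * c * v i) * hscale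

end DualityMap

theorem le_add_mul_add_sq_of_deriv2_le {φ φ' φ'' : ℝ → ℝ} {L x y : ℝ}
    (hφ : ∀ t, HasDerivAt φ (φ' t) t) (hφ' : ∀ t, HasDerivAt φ' (φ'' t) t)
    (hL : ∀ t, φ'' t ≤ L) (hxy : x < y) :
    φ y ≤ φ x + φ' x * (y - x) + L / 2 * (y - x) ^ 2 := by
  have hd : ∀ t, HasDerivAt (fun t => L / 2 * t ^ 2 - φ t) (L * t - φ' t) t := fun t =>
    (((hasDerivAt_pow 2 t).const_mul (L / 2)).fun_sub (hφ t)).congr_deriv (by ring)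
  have hd' : ∀ t, HasDerivAt (fun t => L * t - φ' t) (L - φ'' t) t := fun t =>
    (((hasDerivAt_id' t).const_mul L).fun_sub (hφ' t)).congr_deriv (by ring)
  have hconv : ConvexOn ℝ Set.univ (fun t => L / 2 * t ^ 2 - φ t) :=
    convexOn_of_hasDerivWithinAt2_nonneg convex_univ
      (fun t _ => (hd t).continuousAt.continuousWithinAt)
      (fun t _ => (hd t).hasDerivWithinAt) (fun t _ => (hd' t).hasDerivWithinAt)
      (fun t _ => sub_nonneg.2 (hL t))
  have hslope := hconv.le_slope_of_hasDerivAt (Set.mem_univ x) (Set.mem_univ y) hxy (hd x)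
  rw [slope_def_field, le_div_iff₀ (sub_pos.2 hxy)] at hslope
  nlinarith

section Line

variable {n : ℕ} {p : ℝ} (w h : Fin n → ℝ)

theorem hasDerivAt_add_smul_apply (i : Fin n) (t : ℝ) :
    HasDerivAt (fun t : ℝ => (w + t • h) i) (h i) t := by
  simpa using ((hasDerivAt_id' t).mul_const (h i)).const_add (w i)

theorem hasDerivAt_sum_abs_rpow_add_smul (hp : 1 < p) (t : ℝ) :
    HasDerivAt (fun t : ℝ => ∑ i, |(w + t • h) i| ^ p)
      (p * ∑ i, |(w + t • h) i| ^ (p - 2) * (w + t • h) i * h i) t := by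
  rw [mul_sum]
  refine HasDerivAt.fun_sum fun i _ => ?_
  exact ((hasDerivAt_abs_rpow _ hp).comp t (hasDerivAt_add_smul_apply w h i t)).congr_deriv
    (by ring)

theorem hasDerivAt_sum_abs_rpow_sub_two_mul_add_smul (hp : 2 ≤ p) (t : ℝ) :
    HasDerivAt (fun t : ℝ => ∑ i, |(w + t • h) i| ^ (p - 2) * (w + t • h) i * h i)
      ((p - 1) * ∑ i, |(w + t • h) i| ^ (p - 2) * h i ^ 2) t := by
  rw [mul_sum]
  refine HasDerivAt.fun_sum fun i _ => ?_
  exact (((hasDerivAt_abs_rpow_sub_two_mul_self hp _).comp t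
    (hasDerivAt_add_smul_apply w h i t)).mul_const (h i)).congr_deriv (by ring)

theorem hasDerivAt_pnorm_add_smul_sq (hp : 1 < p) {t : ℝ} (ht : w + t • h ≠ 0) :
    HasDerivAt (fun t : ℝ => pnorm p (w + t • h) ^ 2)
      (2 * ∑ i, h i * dualityMap p (w + t • h) i) t := by
  simp only [pnorm_sq]
  refine ((hasDerivAt_sum_abs_rpow_add_smul w h hp t).rpow_const
    (Or.inl (sum_abs_rpow_pos ht).ne')).congr_deriv ?_
  rw [sum_mul_dualityMap, show 2 / p - 1 = (2 - p) / p by field_simp]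
  field_simp

theorem exists_hasDerivAt_sum_mul_dualityMap_add_smul_le (hp : 2 ≤ p) {t : ℝ}
    (ht : w + t • h ≠ 0) :
    ∃ D ≤ (p - 1) * pnorm p h ^ 2,
      HasDerivAt (fun t : ℝ => ∑ i, h i * dualityMap p (w + t • h) i) D t := by
  set S := ∑ i, |(w + t • h) i| ^ p
  set A := ∑ i, |(w + t • h) i| ^ (p - 2) * (w + t • h) i * h i
  set B := ∑ i, |(w + t • h) i| ^ (p - 2) * h i ^ 2
  have hS : 0 < S := sum_abs_rpow_pos ht
  simp only [sum_mul_dualityMap]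
  refine ⟨_, ?_, ((hasDerivAt_sum_abs_rpow_add_smul w h (by linarith) t).rpow_const
    (Or.inl hS.ne')).mul (hasDerivAt_sum_abs_rpow_sub_two_mul_add_smul w h hp t)⟩
  have hfirst : p * A * ((2 - p) / p) * S ^ ((2 - p) / p - 1) * A ≤ 0 := by
    have : p * A * ((2 - p) / p) * S ^ ((2 - p) / p - 1) * A
        = (2 - p) * (S ^ ((2 - p) / p - 1) * A ^ 2) := by field_simp
    rw [this]
    exact mul_nonpos_of_nonpos_of_nonneg (by linarith) (by positivity)
  have hholder : S ^ ((2 - p) / p) * B ≤ pnorm p h ^ 2 := by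
    calc S ^ ((2 - p) / p) * B ≤ S ^ ((2 - p) / p) * (S ^ ((p - 2) / p) * pnorm p h ^ 2) :=
          mul_le_mul_of_nonneg_left (sum_abs_rpow_sub_two_mul_sq_le hp _ h) (by positivity)
      _ = pnorm p h ^ 2 := by
          rw [← mul_assoc, ← rpow_add hS, ← add_div]
          simp
  have hsecond := mul_le_mul_of_nonneg_left hholder (show 0 ≤ p - 1 by linarith)
  linarith

theorem pnorm_add_sq_le_of_forall_add_smul_ne_zero (hp : 2 ≤ p)
    (hline : ∀ t : ℝ, w + t • h ≠ 0) :
    pnorm p (w + h) ^ 2 ≤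
      pnorm p w ^ 2 + 2 * ∑ i, h i * dualityMap p w i + (p - 1) * pnorm p h ^ 2 := by
  choose D hD_le hD using
    fun t => exists_hasDerivAt_sum_mul_dualityMap_add_smul_le w h hp (hline t)
  have := le_add_mul_add_sq_of_deriv2_le
    (fun t => hasDerivAt_pnorm_add_smul_sq w h (by linarith) (hline t))
    (fun t => (hD t).const_mul 2) (fun t => mul_le_mul_of_nonneg_left (hD_le t) zero_le_two)
    zero_lt_one
  simpa [mul_assoc] using this

theorem pnorm_smul_add_sq_le (hp : 2 ≤ p) (c : ℝ) :
    pnorm p (c • h + h) ^ 2 ≤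
      pnorm p (c • h) ^ 2 + 2 * ∑ i, h i * dualityMap p (c • h) i + (p - 1) * pnorm p h ^ 2 := by
  have hp0 : p ≠ 0 := by positivity
  have hinner : ∑ i, h i * dualityMap p (c • h) i = c * pnorm p h ^ 2 := by
    simp only [dualityMap_smul hp0, Pi.smul_apply, smul_eq_mul, mul_left_comm _ c, ← mul_sum,
      sum_mul_dualityMap_self hp0]
  rw [show c • h + h = (c + 1) • h by rw [add_smul, one_smul], hinner, pnorm_smul hp0,
    pnorm_smul hp0, mul_pow, mul_pow, sq_abs, sq_abs]
  nlinarith [sq_nonneg (pnorm p h)]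

end Line

theorem pnorm_add_sq_le {n : ℕ} {p : ℝ} (hp : 2 ≤ p) (w h : Fin n → ℝ) :
    pnorm p (w + h) ^ 2 ≤
      pnorm p w ^ 2 + 2 * ∑ i, h i * dualityMap p w i + (p - 1) * pnorm p h ^ 2 := by
  by_cases hline : ∃ t : ℝ, w + t • h = 0
  · obtain ⟨t, ht⟩ := hline
    obtain rfl : w = (-t) • h := by rw [neg_smul, eq_neg_iff_add_eq_zero, ht]
    exact pnorm_smul_add_sq_le h hp (-t)
  · exact pnorm_add_sq_le_of_forall_add_smul_ne_zero w h hp (not_exists.1 hline)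

/-- For `p ∈ [2, ∞)`, the function `f(x) = (1/2)‖x − x*‖_p²` is `(p−1)`-smooth on `ℝⁿ`
with respect to the `ℓp`-norm:
`f(y) ≤ f(x) + ⟨y − x, ∇f(x)⟩ + ((p−1)/2)‖y − x‖_p²` for all `x, y`. -/
theorem stmt_3 {n : ℕ} (p : ℝ) (hp : 2 ≤ p) (xs : Fin n → ℝ)
    (f : (Fin n → ℝ) → ℝ)
    (hf : f = fun x => (1 / 2) * (pnorm p (fun i => x i - xs i)) ^ 2)
    (g : (Fin n → ℝ) → (Fin n → ℝ))
    (hg : ∀ x, g x = fun i => (pnorm p (fun j => x j - xs j)) ^ (2 - p) *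
      (Real.sign (x i - xs i) * |x i - xs i| ^ (p - 1))) :
    ∀ x y : Fin n → ℝ,
      f y ≤ f x + (∑ i, (y i - x i) * g x i) +
        (p - 1) / 2 * (pnorm p (fun i => y i - x i)) ^ 2 := by
  intro x y
  have key := pnorm_add_sq_le hp (fun i => x i - xs i) (fun i => y i - x i)
  rw [show (fun i => x i - xs i) + (fun i => y i - x i) = fun i => y i - xs i by ext; simp] at key
  rw [show g x = dualityMap p (fun j => x j - xs j) from hg x, hf]
  linarith
end

section
/- (Hadamard lower bound for the approximate Carathéodory problem.) Let p ∈ [2, ∞), n = 2^k, H_n the n×n Hadamard matrix (entries ±1, columns pairwise orthogonal), C the convex hull of the n columns of H_n/n^{1/p}, and x* = e₁/n^{1/p} (the average of the columns). If x ∈ C is a convex combination of s columns and ‖x − x*‖_p ≤ ε, then s ≥ 1/(ε² + 1/n). -/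
open scoped BigOperators

/-- Hadamard lower bound for the approximate Carathéodory problem: if `x` is a convex
combination of `s` of the `ℓp`-normalized columns of an `n×n` Hadamard matrix
(`n = 2^k`) and `‖x − x*‖_p ≤ ε` where `x* = e₁/n^{1/p}` is the average of the
columns, then `s ≥ 1/(ε² + 1/n)`. -/
theorem stmt_12 {n : ℕ} (hn : 0 < n) (hpow : ∃ k : ℕ, n = 2 ^ k)
    (p : ℝ) (hp : 2 ≤ p)
    (H : Matrix (Fin n) (Fin n) ℝ)
    (hentries : ∀ i j, H i j = 1 ∨ H i j = -1)
    (horth : ∀ j j' : Fin n, j ≠ j' → ∑ i, H i j * H i j' = 0)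
    (havg : ∀ i : Fin n, ∑ j, H i j = if i = (⟨0, hn⟩ : Fin n) then (n : ℝ) else 0)
    (lam : Fin n → ℝ) (hlam0 : ∀ j, 0 ≤ lam j) (hlam1 : ∑ j, lam j = 1)
    (s : ℕ) (hsupp : (Finset.univ.filter fun j => lam j ≠ 0).card ≤ s)
    (x xs : Fin n → ℝ)
    (hx : ∀ i, x i = ∑ j, lam j * (H i j / (n : ℝ) ^ (1 / p)))
    (hxs : ∀ i, xs i = (if i = (⟨0, hn⟩ : Fin n) then (1 : ℝ) else 0) / (n : ℝ) ^ (1 / p))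
    (ε : ℝ) (herr : pnorm p (fun i => x i - xs i) ≤ ε) :
    1 / (ε ^ 2 + 1 / n) ≤ (s : ℝ) := by
  have hN0 : (0:ℝ) < (n:ℝ) := by exact_mod_cast hn
  have hNne : (n:ℝ) ≠ 0 := hN0.ne'
  have hp0 : (0:ℝ) < p := lt_of_lt_of_le (by norm_num) hp
  have hpne : p ≠ 0 := hp0.ne'
  set np : ℝ := (n:ℝ) ^ (1/p) with hnpdef
  have hnp0 : 0 < np := Real.rpow_pos_of_pos hN0 _
  have hnpne : np ≠ 0 := hnp0.ne'
  -- support and positivity of s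
  set T := Finset.univ.filter fun j => lam j ≠ 0 with hT
  have hTsum : ∑ j ∈ T, lam j = 1 := by
    rw [← hlam1]; exact Finset.sum_filter_ne_zero _
  have hs0 : 0 < s := by
    rcases Finset.nonempty_of_sum_ne_zero (by rw [hTsum]; norm_num) with ⟨j, hj⟩
    calc 0 < T.card := Finset.card_pos.mpr ⟨j, hj⟩
      _ ≤ s := hsupp
  have hsR : (0:ℝ) < (s:ℝ) := by exact_mod_cast hs0
  -- Cauchy–Schwarz: 1 ≤ s * ∑ lam²
  have hCS : (1:ℝ) ≤ (s:ℝ) * ∑ j, lam j ^ 2 := by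
    have h2 : (∑ j ∈ T, lam j) ^ 2 ≤ (T.card : ℝ) * ∑ j ∈ T, lam j ^ 2 :=
      sq_sum_le_card_mul_sum_sq
    have h3 : ∑ j ∈ T, lam j ^ 2 ≤ ∑ j, lam j ^ 2 :=
      Finset.sum_le_sum_of_subset_of_nonneg (Finset.filter_subset _ _)
        (fun j _ _ => sq_nonneg _)
    have h4 : (T.card : ℝ) ≤ (s:ℝ) := by exact_mod_cast hsupp
    have h5 : (0:ℝ) ≤ ∑ j ∈ T, lam j ^ 2 := Finset.sum_nonneg fun j _ => sq_nonneg _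
    calc (1:ℝ) = (∑ j ∈ T, lam j) ^ 2 := by rw [hTsum]; norm_num
      _ ≤ (T.card : ℝ) * ∑ j ∈ T, lam j ^ 2 := h2
      _ ≤ (s:ℝ) * ∑ j, lam j ^ 2 :=
          mul_le_mul h4 h3 h5 hsR.le
  -- the deviation vector
  set mu : Fin n → ℝ := fun j => lam j - 1/(n:ℝ) with hmu
  set v : Fin n → ℝ := fun i => x i - xs i with hv
  have hvi : ∀ i, v i = (∑ j, mu j * H i j) / np := by
    intro i
    have hmuH : ∑ j, mu j * H i j
        = (∑ j, lam j * H i j) - (if i = (⟨0, hn⟩ : Fin n) then (1:ℝ) else 0) := by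
      have e : ∀ j, mu j * H i j = lam j * H i j - (1/(n:ℝ)) * H i j := by
        intro j; simp only [hmu]; ring
      rw [Finset.sum_congr rfl fun j _ => e j, Finset.sum_sub_distrib, ← Finset.mul_sum,
        havg i]
      by_cases h : i = (⟨0, hn⟩ : Fin n) <;> simp [h] <;> field_simp
    simp only [hv]
    rw [hx i, hxs i, hmuH, sub_div]
    congr 1
    rw [Finset.sum_div]
    exact Finset.sum_congr rfl fun j _ => by ring
  -- quadratic form identity
  have hdiag : ∀ j i, H i j * H i j = 1 := by
    intro j i; rcases hentries i j with h | h <;> rw [h] <;> norm_num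
  have key : ∑ i, (∑ j, mu j * H i j) ^ 2 = (n:ℝ) * ∑ j, mu j ^ 2 := by
    have expand : ∀ i, (∑ j, mu j * H i j) ^ 2
        = ∑ j, ∑ k, (mu j * mu k) * (H i j * H i k) := by
      intro i
      rw [sq, Finset.sum_mul_sum]
      exact Finset.sum_congr rfl fun j _ => Finset.sum_congr rfl fun k _ => by ring
    rw [Finset.sum_congr rfl fun i _ => expand i, Finset.sum_comm]
    have inner : ∀ j, ∑ i, ∑ k, (mu j * mu k) * (H i j * H i k) = mu j ^ 2 * (n:ℝ) := by
      intro j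
      rw [Finset.sum_comm]
      have e : ∀ k, ∑ i, (mu j * mu k) * (H i j * H i k)
          = (mu j * mu k) * ∑ i, H i j * H i k := fun k => (Finset.mul_sum _ _ _).symm
      rw [Finset.sum_congr rfl fun k _ => e k]
      rw [Finset.sum_eq_single j]
      · have : ∑ i, H i j * H i j = (n:ℝ) := by
          simp [hdiag j]
        rw [this]; ring
      · intro k _ hk
        rw [horth j k (Ne.symm hk), mul_zero]
      · intro h; exact absurd (Finset.mem_univ j) h
    rw [Finset.sum_congr rfl fun j _ => inner j, ← Finset.sum_mul, mul_comm]
  have hS2 : ∑ i, v i ^ 2 = ((n:ℝ) * ∑ j, mu j ^ 2) / np ^ 2 := by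
    calc ∑ i, v i ^ 2 = ∑ i, (∑ j, mu j * H i j) ^ 2 / np ^ 2 := by
          exact Finset.sum_congr rfl fun i _ => by rw [hvi i, div_pow]
      _ = (∑ i, (∑ j, mu j * H i j) ^ 2) / np ^ 2 := by rw [Finset.sum_div]
      _ = _ := by rw [key]
  -- power mean inequality (Hölder)
  have hSp_nonneg : 0 ≤ ∑ i, |v i| ^ p :=
    Finset.sum_nonneg fun i _ => Real.rpow_nonneg (abs_nonneg _) _
  have hq : (1:ℝ) ≤ p/2 := by linarith
  have habs : ∀ i, ((v i) ^ 2) ^ (p/2) = |v i| ^ p := by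
    intro i
    rw [← sq_abs, ← Real.rpow_natCast |v i| 2, ← Real.rpow_mul (abs_nonneg _)]
    congr 1
    push_cast; ring
  have hpm : (∑ i, (1/(n:ℝ)) * v i ^ 2) ^ (p/2) ≤ ∑ i, (1/(n:ℝ)) * ((v i ^ 2) ^ (p/2)) :=
    Real.rpow_arith_mean_le_arith_mean_rpow Finset.univ _ _
      (fun i _ => by positivity)
      (by simp only [Finset.sum_const, Finset.card_univ, Fintype.card_fin, nsmul_eq_mul]
          field_simp)
      (fun i _ => sq_nonneg _) hq
  have hpm' : ((∑ i, v i ^ 2) / (n:ℝ)) ^ (p/2) ≤ (∑ i, |v i| ^ p) / (n:ℝ) := by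
    have l1 : ∑ i, (1/(n:ℝ)) * v i ^ 2 = (∑ i, v i ^ 2) / (n:ℝ) := by
      rw [Finset.sum_div]; exact Finset.sum_congr rfl fun i _ => by ring
    have l2 : ∑ i, (1/(n:ℝ)) * ((v i ^ 2) ^ (p/2)) = (∑ i, |v i| ^ p) / (n:ℝ) := by
      rw [Finset.sum_div]
      exact Finset.sum_congr rfl fun i _ => by rw [← habs i]; ring
    rw [← l1, ← l2]; exact hpm
  have hS2le : (∑ i, v i ^ 2) / (n:ℝ) ≤ ((∑ i, |v i| ^ p) / (n:ℝ)) ^ (2/p) := by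
    have h0 : (0:ℝ) ≤ (∑ i, v i ^ 2) / (n:ℝ) := by positivity
    have hmono := Real.rpow_le_rpow (Real.rpow_nonneg h0 _) hpm'
      (by positivity : (0:ℝ) ≤ 2/p)
    have hprod : p/2 * (2/p) = 1 := by field_simp
    rwa [← Real.rpow_mul h0, hprod, Real.rpow_one] at hmono
  have hpnorm_sq : (pnorm p v) ^ 2 = (∑ i, |v i| ^ p) ^ (2/p) := by
    rw [pnorm, ← Real.rpow_natCast _ 2, ← Real.rpow_mul hSp_nonneg]
    congr 1
    push_cast; ring
  have hnp2 : np ^ 2 = (n:ℝ) ^ (2/p) := by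
    rw [hnpdef, ← Real.rpow_natCast _ 2, ← Real.rpow_mul hN0.le]
    congr 1
    push_cast; ring
  have hmu_le : ∑ j, mu j ^ 2 ≤ ε ^ 2 := by
    have e1 : ∑ j, mu j ^ 2 = (∑ i, v i ^ 2) * np ^ 2 / (n:ℝ) := by
      rw [hS2]; field_simp
    have hpn0 : 0 ≤ pnorm p v := Real.rpow_nonneg hSp_nonneg _
    calc ∑ j, mu j ^ 2 = (∑ i, v i ^ 2) * np ^ 2 / (n:ℝ) := e1
      _ = ((∑ i, v i ^ 2) / (n:ℝ)) * np ^ 2 := by ring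
      _ ≤ ((∑ i, |v i| ^ p) / (n:ℝ)) ^ (2/p) * np ^ 2 :=
          mul_le_mul_of_nonneg_right hS2le (by positivity)
      _ = (∑ i, |v i| ^ p) ^ (2/p) := by
          rw [Real.div_rpow hSp_nonneg hN0.le, hnp2, div_mul_cancel₀]
          exact (Real.rpow_pos_of_pos hN0 _).ne'
      _ = (pnorm p v) ^ 2 := hpnorm_sq.symm
      _ ≤ ε ^ 2 := by nlinarith [herr, hpn0]
  -- expanding the square
  have hmusum : ∑ j, mu j ^ 2 = (∑ j, lam j ^ 2) - 1/(n:ℝ) := by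
    have e : ∀ j, mu j ^ 2 = lam j ^ 2 - 2/(n:ℝ) * lam j + 1/(n:ℝ) ^ 2 := by
      intro j; simp only [hmu]; ring
    rw [Finset.sum_congr rfl fun j _ => e j, Finset.sum_add_distrib,
      Finset.sum_sub_distrib, ← Finset.mul_sum, hlam1, Finset.sum_const,
      Finset.card_univ, Fintype.card_fin, nsmul_eq_mul]
    field_simp
    ring
  -- conclusion
  have hfin : 1/(s:ℝ) ≤ ε ^ 2 + 1/(n:ℝ) := by
    have h1 : 1/(s:ℝ) ≤ ∑ j, lam j ^ 2 := by
      rw [div_le_iff₀ hsR]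
      linarith [hCS]
    linarith [hmu_le, hmusum]
  calc 1/(ε ^ 2 + 1/(n:ℝ)) ≤ 1/(1/(s:ℝ)) :=
        one_div_le_one_div_of_le (by positivity) hfin
    _ = (s:ℝ) := one_div_one_div _
end

section
/- (Telescoping bound in the HCGS analysis.) Let G, D > 0 and define a nonnegative sequence (ε_t)_{t≥0} by ε₀ arbitrary and satisfying, for all t ≥ 0, ε_{t+1} ≤ (t/(t+2))ε_t + GD·√(t+2)/(t+2)² + GD·(√(t+3) − √(t+2))/√((t+3)(t+2)). Then for all t ≥ 1, ε_{t+1} ≤ (2/3)GD·(t+3)^{3/2}/((t+1)(t+2)) + GD/√(t+2), and in particular ε_{t+1} ≤ 3GD/√(t+2). -/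
/-!
Multiplying the recursion by `(t + 1)(t + 2)` turns the weight `t / (t + 2)` into the
telescoping pair `(t + 1)(t + 2)`, `t(t + 1)`. The two forcing terms are then bounded by
increments of the potential `(2/3)(t + 2)^{3/2} + t √(t + 1)`: the first because
`√a ≤ (2/3)((a + 1)^{3/2} - a^{3/2})` (the integral comparison), the second because
`(√b - √a)/√(ab) = 1/√a - 1/√b`. Summing gives `t(t + 1) ε_t ≤ GD · potential(t)`,
and dividing by `(t + 1)(t + 2)` at `t + 1` gives both bounds.
-/

open Real

lemma rpow_three_halves {x : ℝ} (hx : 0 ≤ x) : x ^ (3 / 2 : ℝ) = x * √x := by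
  rw [show (3 / 2 : ℝ) = 1 / 2 + 1 by norm_num, rpow_add_one' hx (by norm_num), ← sqrt_eq_rpow,
    mul_comm]

lemma sqrt_mul_sub_le_rpow_sub {x y : ℝ} (hx : 0 ≤ x) (hxy : x ≤ y) :
    √x * (y - x) ≤ 2 / 3 * (y ^ (3 / 2 : ℝ) - x ^ (3 / 2 : ℝ)) := by
  obtain ⟨a, ha, rfl⟩ : ∃ a, 0 ≤ a ∧ a ^ 2 = x := ⟨√x, sqrt_nonneg x, sq_sqrt hx⟩
  obtain ⟨b, hb, rfl⟩ : ∃ b, 0 ≤ b ∧ b ^ 2 = y := ⟨√y, sqrt_nonneg y, sq_sqrt (hx.trans hxy)⟩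
  rw [rpow_three_halves (sq_nonneg a), rpow_three_halves (sq_nonneg b), sqrt_sq ha, sqrt_sq hb]
  nlinarith [mul_nonneg (sq_nonneg (b - a)) (by positivity : 0 ≤ 2 * b + a)]

lemma sqrt_sub_sqrt_div_sqrt_mul {a b : ℝ} (ha : 0 < a) (hb : 0 < b) :
    (√b - √a) / √(b * a) = (√a)⁻¹ - (√b)⁻¹ := by
  have := sqrt_pos.2 ha
  have := sqrt_pos.2 hb
  rw [sqrt_mul hb.le]
  field_simp

lemma mul_sqrt_div_sq_le_rpow_sub {x : ℝ} (hx : 0 ≤ x) :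
    (x + 1) * (x + 2) * (√(x + 2) / (x + 2) ^ 2)
      ≤ 2 / 3 * ((x + 3) ^ (3 / 2 : ℝ) - (x + 2) ^ (3 / 2 : ℝ)) := by
  have hint := sqrt_mul_sub_le_rpow_sub (by linarith : 0 ≤ x + 2) (by linarith : x + 2 ≤ x + 3)
  calc (x + 1) * (x + 2) * (√(x + 2) / (x + 2) ^ 2) = (x + 1) / (x + 2) * √(x + 2) := by
        field_simp
    _ ≤ 1 * √(x + 2) := by gcongr; rw [div_le_one₀ (by linarith)]; linarith
    _ ≤ _ := by linarith

lemma mul_sqrt_sub_sqrt_div_le {x : ℝ} (hx : 0 ≤ x) :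
    (x + 1) * (x + 2) * ((√(x + 3) - √(x + 2)) / √((x + 3) * (x + 2)))
      ≤ (x + 1) * √(x + 2) - x * √(x + 1) := by
  have h2 := sqrt_pos.2 (by linarith : 0 < x + 2)
  have h3 := sqrt_pos.2 (by linarith : 0 < x + 3)
  have hgm : √(x + 1) * √(x + 3) ≤ x + 2 := by
    rw [← sqrt_mul (by linarith), sqrt_le_left (by linarith)]
    nlinarith
  have hsq2 : √(x + 2) ^ 2 = x + 2 := sq_sqrt (by linarith)
  rw [sqrt_sub_sqrt_div_sqrt_mul (by linarith) (by linarith)]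
  have : x * √(x + 1) ≤ (x + 1) * (x + 2) / √(x + 3) := by
    rw [le_div_iff₀ h3]
    nlinarith [mul_le_mul_of_nonneg_left hgm hx]
  calc (x + 1) * (x + 2) * ((√(x + 2))⁻¹ - (√(x + 3))⁻¹)
        = (x + 1) * √(x + 2) - (x + 1) * (x + 2) / √(x + 3) := by
          field_simp
          linear_combination -√(x + 3) * hsq2
    _ ≤ (x + 1) * √(x + 2) - x * √(x + 1) := by linarith

lemma scaled_step_le {x e e' c : ℝ} (hx : 0 ≤ x) (hc : 0 ≤ c)
    (h : e' ≤ x / (x + 2) * e + c * √(x + 2) / (x + 2) ^ 2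
      + c * (√(x + 3) - √(x + 2)) / √((x + 3) * (x + 2))) :
    (x + 1) * (x + 2) * e' ≤ x * (x + 1) * e
      + c * (2 / 3 * ((x + 3) ^ (3 / 2 : ℝ) - (x + 2) ^ (3 / 2 : ℝ))
        + ((x + 1) * √(x + 2) - x * √(x + 1))) := by
  have hw : 0 ≤ (x + 1) * (x + 2) := by positivity
  have hdrift := mul_le_mul_of_nonneg_left (mul_sqrt_div_sq_le_rpow_sub hx) hc
  have hcorr := mul_le_mul_of_nonneg_left (mul_sqrt_sub_sqrt_div_le hx) hc
  have hscaled := mul_le_mul_of_nonneg_left h hw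
  have hcontr : (x + 1) * (x + 2) * (x / (x + 2) * e) = x * (x + 1) * e := by
    field_simp
  rw [mul_div_assoc, mul_div_assoc] at hscaled
  linarith

lemma scaled_le_of_recursion {c : ℝ} (hc : 0 ≤ c) (ε : ℕ → ℝ)
    (hrec : ∀ t : ℕ, ε (t + 1) ≤
      ((t : ℝ) / ((t : ℝ) + 2)) * ε t
      + c * √((t : ℝ) + 2) / ((t : ℝ) + 2) ^ 2
      + c * (√((t : ℝ) + 3) - √((t : ℝ) + 2)) / √(((t : ℝ) + 3) * ((t : ℝ) + 2)))
    (t : ℕ) :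
    (t : ℝ) * (t + 1) * ε t ≤ c * (2 / 3 * ((t : ℝ) + 2) ^ (3 / 2 : ℝ) + t * √((t : ℝ) + 1)) := by
  set g : ℕ → ℝ := fun t ↦
    c * (2 / 3 * ((t : ℝ) + 2) ^ (3 / 2 : ℝ) + t * √((t : ℝ) + 1)) - t * (t + 1) * ε t
  have hg : Monotone g := monotone_nat_of_le_succ fun t ↦ by
    have := scaled_step_le (Nat.cast_nonneg t) hc (hrec t)
    simp only [g]
    push_cast
    ring_nf at this ⊢
    linarith
  have h0 : 0 ≤ g 0 := by norm_num [g]; positivity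
  exact sub_nonneg.1 (h0.trans (hg t.zero_le))

lemma rpow_three_halves_div_le {x : ℝ} (hx : 1 ≤ x) :
    (x + 3) ^ (3 / 2 : ℝ) / ((x + 1) * (x + 2)) ≤ 3 / √(x + 2) := by
  have h2 := sqrt_pos.2 (by linarith : 0 < x + 2)
  rw [rpow_three_halves (by linarith), div_le_div_iff₀ (by positivity) h2, mul_assoc,
    ← sqrt_mul (by linarith)]
  have hcube : (x + 3) ^ 2 * ((x + 3) * (x + 2)) ≤ (3 * ((x + 1) * (x + 2))) ^ 2 := by
    nlinarith [sq_nonneg (x - 1)]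
  calc (x + 3) * √((x + 3) * (x + 2)) = √((x + 3) ^ 2 * ((x + 3) * (x + 2))) := by
        rw [sqrt_mul (sq_nonneg (x + 3)), sqrt_sq (by linarith)]
    _ ≤ 3 * ((x + 1) * (x + 2)) := sqrt_le_iff.2 ⟨by positivity, hcube⟩

theorem stmt_18_general (G D : ℝ) (hG : 0 < G) (hD : 0 < D)
    (ε : ℕ → ℝ)
    (hrec : ∀ t : ℕ, ε (t + 1) ≤
      ((t : ℝ) / ((t : ℝ) + 2)) * ε t
      + G * D * Real.sqrt ((t : ℝ) + 2) / ((t : ℝ) + 2) ^ 2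
      + G * D * (Real.sqrt ((t : ℝ) + 3) - Real.sqrt ((t : ℝ) + 2)) /
          Real.sqrt (((t : ℝ) + 3) * ((t : ℝ) + 2))) :
    ∀ t : ℕ, 1 ≤ t →
      ε (t + 1) ≤ (2 / 3) * G * D * ((t : ℝ) + 3) ^ ((3 : ℝ) / 2) /
          (((t : ℝ) + 1) * ((t : ℝ) + 2)) + G * D / Real.sqrt ((t : ℝ) + 2) ∧
      ε (t + 1) ≤ 3 * G * D / Real.sqrt ((t : ℝ) + 2) := by
  intro t ht
  have hGD := (mul_pos hG hD).le
  have hx : (1 : ℝ) ≤ t := by exact_mod_cast ht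
  have hbound := scaled_le_of_recursion hGD ε hrec (t + 1)
  have h2 := sqrt_pos.2 (by linarith : (0 : ℝ) < t + 2)
  have hsq2 : √((t : ℝ) + 2) ^ 2 = t + 2 := sq_sqrt (by linarith)
  have hfirst : ε (t + 1) ≤ 2 / 3 * G * D * ((t : ℝ) + 3) ^ (3 / 2 : ℝ) /
      ((t + 1) * (t + 2)) + G * D / √((t : ℝ) + 2) := by
    push_cast at hbound
    rw [show (t : ℝ) + 1 + 2 = t + 3 by ring, show (t : ℝ) + 1 + 1 = t + 2 by ring] at hbound
    rw [div_add_div _ _ (by positivity) h2.ne', le_div_iff₀ (by positivity)]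
    have := mul_le_mul_of_nonneg_right hbound h2.le
    linear_combination this + (t + 1) * (G * D) * hsq2
  refine ⟨hfirst, hfirst.trans ?_⟩
  calc 2 / 3 * G * D * ((t : ℝ) + 3) ^ (3 / 2 : ℝ) / ((t + 1) * (t + 2)) + G * D / √((t : ℝ) + 2)
      = 2 / 3 * (G * D * (((t : ℝ) + 3) ^ (3 / 2 : ℝ) / ((t + 1) * (t + 2))))
        + G * D / √((t : ℝ) + 2) := by ring
    _ ≤ 2 / 3 * (G * D * (3 / √((t : ℝ) + 2))) + G * D / √((t : ℝ) + 2) := by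
        gcongr 2 / 3 * (G * D * ?_) + _; exact rpow_three_halves_div_le hx
    _ = 3 * G * D / √((t : ℝ) + 2) := by ring

/-- Telescoping bound in the HCGS analysis: a nonnegative sequence satisfying the
stated recursion obeys
`ε_{t+1} ≤ (2/3)GD(t+3)^{3/2}/((t+1)(t+2)) + GD/√(t+2) ≤ 3GD/√(t+2)` for `t ≥ 1`. -/
theorem stmt_18 (G D : ℝ) (hG : 0 < G) (hD : 0 < D)
    (ε : ℕ → ℝ) (hnn : ∀ t, 0 ≤ ε t)
    (hrec : ∀ t : ℕ, ε (t + 1) ≤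
      ((t : ℝ) / ((t : ℝ) + 2)) * ε t
      + G * D * Real.sqrt ((t : ℝ) + 2) / ((t : ℝ) + 2) ^ 2
      + G * D * (Real.sqrt ((t : ℝ) + 3) - Real.sqrt ((t : ℝ) + 2)) /
          Real.sqrt (((t : ℝ) + 3) * ((t : ℝ) + 2))) :
    ∀ t : ℕ, 1 ≤ t →
      ε (t + 1) ≤ (2 / 3) * G * D * ((t : ℝ) + 3) ^ ((3 : ℝ) / 2) /
          (((t : ℝ) + 1) * ((t : ℝ) + 2)) + G * D / Real.sqrt ((t : ℝ) + 2) ∧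
      ε (t + 1) ≤ 3 * G * D / Real.sqrt ((t : ℝ) + 2) :=
  stmt_18_general G D hG hD ε hrec
end
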